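/- arXiv:2310.04062 — 2 statements merged into one kernel-verified Lean document; each statement's English description precedes it below -/
import Mathlib

section
/- There exists δ̃ > 0, independent of s, such that for every s ∈ [0,b) and every x > 0 with |x − x_s| ≤ δ̃, one has ν_s(x) ≤ m_s + 1; that is, [x_s − δ̃, x_s + δ̃] ⊆ [y_s − δ_s, y_s + δ_s]. -/
open Real Set Filter MeasureTheory

/-- `J(x) = ∏ i sinh (cᵢ x)`. -/
noncomputable def Jfun (r : ℕ) (c : Fin r → ℝ) (x : ℝ) : ℝ :=
  ∏ i, Real.sinh (c i * x)

/-- `j = - log J`. -/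
noncomputable def jfun (r : ℕ) (c : Fin r → ℝ) (x : ℝ) : ℝ :=
  - Real.log (Jfun r c x)

/-- A solution at level `s`: a smooth even function `u` with `u'' > 0`, whose derivative
maps `[0,∞)` onto `[0, λ - s)`, satisfying `u'' v(u') = e^{-2u} J` on `(0,∞)`. -/
def IsSolution (r : ℕ) (c : Fin r → ℝ) (v : ℝ → ℝ) (lam s : ℝ) (u : ℝ → ℝ) : Prop :=
  ContDiff ℝ (⊤ : ℕ∞) u ∧ (∀ x, u (-x) = u x) ∧ (∀ x, 0 < deriv (deriv u) x) ∧
  deriv u '' Set.Ici (0:ℝ) = Set.Ico 0 (lam - s) ∧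
  ∀ x, 0 < x → deriv (deriv u) x * v (deriv u x) = Real.exp (-(2 * u x)) * Jfun r c x

lemma my_sinh_lt_mul_cosh {t : ℝ} (ht : 0 < t) : Real.sinh t < t * Real.cosh t := by
  have key : StrictMonoOn (fun x => x * Real.cosh x - Real.sinh x) (Set.Ici 0) := by
    apply strictMonoOn_of_deriv_pos (convex_Ici 0)
    · fun_prop
    · intro x hx
      rw [interior_Ici] at hx
      have h : HasDerivAt (fun x => x * Real.cosh x - Real.sinh x)
          (1 * Real.cosh x + x * Real.sinh x - Real.cosh x) x :=
        ((hasDerivAt_id x).mul (Real.hasDerivAt_cosh x)).sub (Real.hasDerivAt_sinh x)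
      rw [h.deriv]
      have h1 := Real.sinh_pos_iff.mpr hx
      have h2 := Set.mem_Ioi.mp hx
      nlinarith [mul_pos h2 h1]
  have := key (Set.self_mem_Ici) (Set.mem_Ici.mpr ht.le) ht
  simpa using this

lemma my_coth_le {t : ℝ} (ht : 0 < t) : Real.cosh t / Real.sinh t ≤ 1 + 1 / t := by
  have hs : 0 < Real.sinh t := Real.sinh_pos_iff.mpr ht
  have hexp : 2 * t + 1 ≤ Real.exp (2 * t) := Real.add_one_le_exp (2 * t)
  have h1 : t * Real.exp (-t) ≤ Real.sinh t := by
    rw [Real.sinh_eq]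
    have h2 : Real.exp t = Real.exp (-t) * Real.exp (2 * t) := by
      rw [← Real.exp_add]; ring_nf
    rw [h2]
    have h3 : 0 < Real.exp (-t) := Real.exp_pos _
    nlinarith
  have h4 : Real.cosh t = Real.sinh t + Real.exp (-t) := by
    have := Real.cosh_sub_sinh t; linarith
  rw [h4, div_le_iff₀ hs]
  have h5 : Real.exp (-t) * t ≤ Real.sinh t := by nlinarith
  have h6 : (1 + 1/t) * Real.sinh t = Real.sinh t + Real.sinh t / t := by
    field_simp
  rw [h6]
  have h7 : Real.exp (-t) ≤ Real.sinh t / t := (le_div_iff₀ ht).mpr h5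
  linarith

lemma jfun_hasDerivAt (r : ℕ) (c : Fin r → ℝ) (hc : ∀ i, 0 < c i) {t : ℝ} (ht : 0 < t) :
    HasDerivAt (jfun r c)
      (-(∑ i, c i * (Real.cosh (c i * t) / Real.sinh (c i * t)))) t := by
  have hF : HasDerivAt (fun x => -∑ i, Real.log (Real.sinh (c i * x)))
      (-(∑ i, c i * (Real.cosh (c i * t) / Real.sinh (c i * t)))) t := by
    apply HasDerivAt.neg
    apply HasDerivAt.fun_sum
    intro i _
    have h1 : HasDerivAt (fun x : ℝ => c i * x) (c i) t := by
      simpa using (hasDerivAt_id t).const_mul (c i)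
    have h2 : HasDerivAt (fun x => Real.sinh (c i * x)) (Real.cosh (c i * t) * c i) t :=
      h1.sinh
    have hse : Real.sinh (c i * t) ≠ 0 :=
      (Real.sinh_pos_iff.mpr (mul_pos (hc i) ht)).ne'
    have h3 := h2.log hse
    rw [show c i * (Real.cosh (c i * t) / Real.sinh (c i * t))
      = Real.cosh (c i * t) * c i / Real.sinh (c i * t) by ring]
    exact h3
  apply hF.congr_of_eventuallyEq
  filter_upwards [eventually_gt_nhds ht] with x hx
  unfold jfun Jfun
  rw [Real.log_prod (fun i _ => (Real.sinh_pos_iff.mpr (mul_pos (hc i) hx)).ne')]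

lemma mvt_abs_le {f f' : ℝ → ℝ} {K a x : ℝ}
    (hd : ∀ t ∈ Set.Icc (min a x) (max a x), HasDerivAt f (f' t) t)
    (hb : ∀ t ∈ Set.Icc (min a x) (max a x), |f' t| ≤ K) :
    |f x - f a| ≤ K * |x - a| := by
  rcases le_total a x with h | h
  · rw [min_eq_left h, max_eq_right h] at hd hb
    have := norm_image_sub_le_of_norm_deriv_le_segment'
      (f' := f') (fun t ht => (hd t ht).hasDerivWithinAt)
      (fun t ht => hb t (Set.Ico_subset_Icc_self ht)) x (Set.right_mem_Icc.mpr h)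
    rw [abs_of_nonneg (by linarith : (0:ℝ) ≤ x - a)]
    simpa using this
  · rw [min_eq_right h, max_eq_left h] at hd hb
    have := norm_image_sub_le_of_norm_deriv_le_segment'
      (f' := f') (fun t ht => (hd t ht).hasDerivWithinAt)
      (fun t ht => hb t (Set.Ico_subset_Icc_self ht)) a (Set.right_mem_Icc.mpr h)
    rw [abs_sub_comm, abs_sub_comm x a, abs_of_nonneg (by linarith : (0:ℝ) ≤ a - x)]
    simpa using this

theorem uniform_inner_interval
    (r : ℕ) (hr : 1 ≤ r) (c : Fin r → ℝ) (hc : ∀ i, 0 < c i)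
    (lam : ℝ) (hlam : lam = 1 + (1/2) * ∑ i, c i)
    (v : ℝ → ℝ) (m : ℕ) (A : ℝ) (hA : 0 < A) (a bk : Fin m → ℝ)
    (hbk : ∀ k, bk k ≠ 0)
    (hv : ∀ p, v p = A * p ^ r * ∏ k, (bk k - a k * p))
    (hvpos : ∀ p ∈ Set.Ioo (0:ℝ) lam, 0 < v p)
    (b : ℝ) (hb : b ∈ Set.Ioc (0:ℝ) 1)
    (u : ℝ → ℝ → ℝ) (hu : ∀ s ∈ Set.Ico (0:ℝ) b, IsSolution r c v lam s (u s))
    (xs ms ys ds : ℝ → ℝ)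
    (hxs : ∀ s ∈ Set.Ico (0:ℝ) b, xs s ∈ Set.Ioi (0:ℝ) ∧
      ∀ x ∈ Set.Ioi (0:ℝ), ms s ≤ 2 * u s x + jfun r c x)
    (hms : ∀ s ∈ Set.Ico (0:ℝ) b, ms s = 2 * u s (xs s) + jfun r c (xs s))
    (hds : ∀ s ∈ Set.Ico (0:ℝ) b, 0 ≤ ds s ∧
      Set.Icc (ys s - ds s) (ys s + ds s) =
        {x : ℝ | 0 < x ∧ 2 * u s x + jfun r c x ≤ ms s + 1}) :
    ∃ δt > (0:ℝ), ∀ s ∈ Set.Ico (0:ℝ) b,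
      (∀ x : ℝ, 0 < x → |x - xs s| ≤ δt → 2 * u s x + jfun r c x ≤ ms s + 1) ∧
      Set.Icc (xs s - δt) (xs s + δt) ⊆ Set.Icc (ys s - ds s) (ys s + ds s) := by
  haveI : Nonempty (Fin r) := Fin.pos_iff_nonempty.mp hr
  have hS : 0 < ∑ i, c i := Finset.sum_pos (fun i _ => hc i) Finset.univ_nonempty
  have hlam1 : (1:ℝ) < lam := by rw [hlam]; linarith
  have hlam0 : (0:ℝ) < lam := by linarith
  set T := ∑ i : Fin r, (c i + 4 * lam) with hTdef
  have hT : 0 < T := Finset.sum_pos (fun i _ => by have := hc i; linarith) Finset.univ_nonempty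
  set K := 2 * lam + T with hKdef
  have hK : 0 < K := by positivity
  set δt := min (1 / (4 * lam)) (1 / K) with hδdef
  have hδ0 : 0 < δt := lt_min (by positivity) (by positivity)
  have hδle1 : δt ≤ 1 / (4 * lam) := min_le_left _ _
  have hδle2 : δt ≤ 1 / K := min_le_right _ _
  have he4 : 1/(2*lam) - 1/(4*lam) = 1/(4*lam) := by field_simp; ring
  refine ⟨δt, hδ0, ?_⟩
  intro s hs
  obtain ⟨hu1, hu2, hu3, hu4, hu5⟩ := hu s hs
  have hs0 : 0 ≤ s := hs.1
  have hud : ∀ t : ℝ, 0 ≤ t → 0 ≤ deriv (u s) t ∧ deriv (u s) t < lam := by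
    intro t htt
    have hmem : deriv (u s) t ∈ deriv (u s) '' Set.Ici (0:ℝ) := ⟨t, htt, rfl⟩
    rw [hu4] at hmem
    exact ⟨hmem.1, by have := hmem.2; linarith⟩
  have hν : ∀ t : ℝ, 0 < t → HasDerivAt (fun x => 2 * u s x + jfun r c x)
      (2 * deriv (u s) t + -(∑ i, c i * (Real.cosh (c i * t) / Real.sinh (c i * t)))) t := by
    intro t htt
    have h1 : HasDerivAt (u s) (deriv (u s) t) t :=
      (hu1.differentiable (by simp) t).hasDerivAt
    exact (h1.const_mul 2).add (jfun_hasDerivAt r c hc htt)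
  have hp : 0 < xs s := (hxs s hs).1
  have hmin : IsLocalMin (fun x => 2 * u s x + jfun r c x) (xs s) := by
    have hmem : Set.Ioi (0:ℝ) ∈ nhds (xs s) := isOpen_Ioi.mem_nhds hp
    filter_upwards [hmem] with x hx
    show 2 * u s (xs s) + jfun r c (xs s) ≤ 2 * u s x + jfun r c x
    rw [← hms s hs]
    exact (hxs s hs).2 x hx
  have hzero := hmin.hasDerivAt_eq_zero (hν (xs s) hp)
  have hsum_eq : (∑ i, c i * (Real.cosh (c i * xs s) / Real.sinh (c i * xs s)))
      = 2 * deriv (u s) (xs s) := by linarith [hzero]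
  have hterm_gt : ∀ i : Fin r,
      1 / xs s < c i * (Real.cosh (c i * xs s) / Real.sinh (c i * xs s)) := by
    intro i
    have hy : 0 < c i * xs s := mul_pos (hc i) hp
    have hsinh : 0 < Real.sinh (c i * xs s) := Real.sinh_pos_iff.mpr hy
    have hlt := my_sinh_lt_mul_cosh hy
    have h1 : 1 / xs s < (c i * Real.cosh (c i * xs s)) / Real.sinh (c i * xs s) := by
      rw [div_lt_div_iff₀ hp hsinh]
      nlinarith [Real.cosh_pos (c i * xs s)]
    simpa [mul_div_assoc] using h1
  have hsum_ge : 1 / xs s ≤ ∑ i, c i * (Real.cosh (c i * xs s) / Real.sinh (c i * xs s)) := by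
    have h0 : 0 < 1 / xs s := by positivity
    have h1 : (1:ℝ) ≤ (r:ℝ) := by exact_mod_cast hr
    calc 1 / xs s ≤ (r:ℝ) * (1 / xs s) := by nlinarith
      _ = ∑ _i : Fin r, 1 / xs s := by
          simp [Finset.sum_const, Finset.card_univ, nsmul_eq_mul]
      _ ≤ _ := Finset.sum_le_sum (fun i _ => (hterm_gt i).le)
  have hxlb : 1 / (2 * lam) < xs s := by
    have h2 : 1 / xs s < 2 * lam := by
      have h3 := (hud (xs s) hp.le).2
      rw [hsum_eq] at hsum_ge
      linarith
    rw [div_lt_iff₀ hp] at h2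
    rw [div_lt_iff₀ (by positivity : (0:ℝ) < 2 * lam)]
    nlinarith
  have hbound : ∀ t : ℝ, 1/(4*lam) ≤ t →
      |2 * deriv (u s) t + -(∑ i, c i * (Real.cosh (c i * t) / Real.sinh (c i * t)))| ≤ K := by
    intro t htt
    have ht0 : 0 < t := lt_of_lt_of_le (by positivity) htt
    have hd := hud t ht0.le
    have hterm_le : ∀ i : Fin r,
        c i * (Real.cosh (c i * t) / Real.sinh (c i * t)) ≤ c i + 4 * lam := by
      intro i
      have hy : 0 < c i * t := mul_pos (hc i) ht0
      have h1 := my_coth_le hy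
      have h2 : c i * (Real.cosh (c i * t) / Real.sinh (c i * t))
          ≤ c i * (1 + 1 / (c i * t)) := mul_le_mul_of_nonneg_left h1 (hc i).le
      have h3 : c i * (1 + 1 / (c i * t)) = c i + 1 / t := by
        field_simp; rw [mul_add, mul_one_div_cancel (hc i).ne']
      have h4 : 1 / t ≤ 4 * lam := by
        rw [div_le_iff₀ ht0]
        have h5 : 1 / (4 * lam) * (4 * lam) ≤ t * (4 * lam) := by
          apply mul_le_mul_of_nonneg_right htt; positivity
        have h6 : 1 / (4 * lam) * (4 * lam) = 1 := by field_simp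
        linarith
      rw [h3] at h2
      linarith
    have hterm_ge : ∀ i : Fin r,
        0 ≤ c i * (Real.cosh (c i * t) / Real.sinh (c i * t)) := by
      intro i
      have hy : 0 < c i * t := mul_pos (hc i) ht0
      have hsinh : 0 < Real.sinh (c i * t) := Real.sinh_pos_iff.mpr hy
      exact mul_nonneg (hc i).le (div_nonneg (Real.cosh_pos _).le hsinh.le)
    have hsum_le : ∑ i, c i * (Real.cosh (c i * t) / Real.sinh (c i * t)) ≤ T :=
      Finset.sum_le_sum (fun i _ => hterm_le i)
    have hsum_ge0 : 0 ≤ ∑ i, c i * (Real.cosh (c i * t) / Real.sinh (c i * t)) :=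
      Finset.sum_nonneg (fun i _ => hterm_ge i)
    rw [abs_le]
    constructor
    · rw [hKdef]; linarith [hd.1, hd.2]
    · rw [hKdef]; linarith [hd.1, hd.2]
  have part1 : ∀ x : ℝ, 0 < x → |x - xs s| ≤ δt → 2 * u s x + jfun r c x ≤ ms s + 1 := by
    intro x hx hxd
    have habs := abs_le.mp hxd
    have hxge : 1/(4*lam) ≤ x := by linarith [hxlb, habs.1]
    have hpge : 1/(4*lam) ≤ xs s := by
      have : 0 < 1/(4*lam) := by positivity
      linarith [hxlb]
    have hminge : 1/(4*lam) ≤ min (xs s) x := le_min hpge hxge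
    have hmvt : |(2 * u s x + jfun r c x) - (2 * u s (xs s) + jfun r c (xs s))|
        ≤ K * |x - xs s| := by
      have hmvt0 := mvt_abs_le (f := fun x => 2 * u s x + jfun r c x)
        (f' := fun t => 2 * deriv (u s) t +
          -(∑ i, c i * (Real.cosh (c i * t) / Real.sinh (c i * t))))
        (K := K) (a := xs s) (x := x)
        (fun t htI => hν t (lt_of_lt_of_le (by positivity) (le_trans hminge htI.1)))
        (fun t htI => hbound t (le_trans hminge htI.1))
      simpa using hmvt0
    have hK1 : K * |x - xs s| ≤ 1 := by
      have h1 : |x - xs s| ≤ 1/K := le_trans hxd hδle2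
      have h2 : K * |x - xs s| ≤ K * (1/K) := mul_le_mul_of_nonneg_left h1 hK.le
      calc K * |x - xs s| ≤ K * (1/K) := h2
        _ = 1 := by field_simp
    have h2 : 2 * u s x + jfun r c x - (2 * u s (xs s) + jfun r c (xs s)) ≤ 1 :=
      le_trans (le_trans (le_abs_self _) hmvt) hK1
    have h3 := hms s hs
    linarith
  refine ⟨part1, ?_⟩
  intro z hz
  have hz0 : 0 < z := by
    have h0 : 0 < 1/(4*lam) := by positivity
    linarith [hz.1, hxlb, hδle1]
  have hzd : |z - xs s| ≤ δt := abs_le.mpr ⟨by linarith [hz.1], by linarith [hz.2]⟩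
  rw [(hds s hs).2]
  exact ⟨hz0, part1 z hz0 hzd⟩
end

section
/- There exists a constant C > 0, independent of s, such that for all s ∈ [0,b) one has δ_s ≤ C·e^{m_s/2}. -/
open Real Set Filter MeasureTheory

lemma sinh_mul_sinh_le (a b : ℝ) :
    Real.sinh a * Real.sinh b ≤ Real.sinh ((a+b)/2) ^ 2 := by
  have e1 : Real.cosh (a+b) = Real.cosh ((a+b)/2)^2 + Real.sinh ((a+b)/2)^2 := by
    rw [show a+b = (a+b)/2 + (a+b)/2 by ring, Real.cosh_add]; ring
  have e2 := Real.cosh_add a b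
  have e3 := Real.cosh_sub a b
  have e4 := Real.one_le_cosh (a-b)
  have e5 := Real.cosh_sq ((a+b)/2)
  nlinarith

lemma uconv {u : ℝ → ℝ} (hu : ContDiff ℝ (⊤ : ℕ∞) u) {κ p q : ℝ} (hpq : p ≤ q)
    (hκ : ∀ x ∈ Set.Icc p q, κ ≤ deriv (deriv u) x) :
    u ((p+q)/2) ≤ (u p + u q)/2 - κ * (q-p)^2/8 := by
  have hud : Differentiable ℝ u := hu.differentiable (by simp)
  have hud' : Differentiable ℝ (deriv u) :=
    (contDiff_infty_iff_deriv.mp (hu.of_le (by simp))).2.differentiable (by simp)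
  set g : ℝ → ℝ := fun x => u x - κ/2 * x^2 with hg
  have hdg : deriv g = fun x => deriv u x - κ * x := by
    funext x
    have h2 : HasDerivAt (fun y : ℝ => κ/2 * y^2) (κ * x) x := by
      have h := (hasDerivAt_pow 2 x).const_mul (κ/2)
      exact h.congr_deriv (by push_cast; ring)
    exact (((hud x).hasDerivAt).sub h2).deriv
  have hgd : Differentiable ℝ g := fun x => (hud x).sub (by fun_prop)
  have hdgd : Differentiable ℝ (deriv g) := by
    rw [hdg]; exact hud'.sub (by fun_prop)
  have hconv : ConvexOn ℝ (Set.Icc p q) g := by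
    apply convexOn_of_deriv2_nonneg' (convex_Icc p q) hgd.differentiableOn
      hdgd.differentiableOn
    intro x hx
    have hit : deriv^[2] g x = deriv (deriv g) x := by
      simp [Function.iterate_succ, Function.iterate_zero]
    have h3 : HasDerivAt (fun y : ℝ => κ * y) κ x := by
      simpa using (hasDerivAt_id x).const_mul κ
    have h4 : deriv (fun x => deriv u x - κ * x) x = deriv (deriv u) x - κ :=
      (((hud' x).hasDerivAt).sub h3).deriv
    rw [hit, hdg, h4]
    linarith [hκ x hx]
  have key := hconv.2 (Set.left_mem_Icc.mpr hpq) (Set.right_mem_Icc.mpr hpq)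
    (by norm_num : (0:ℝ) ≤ 1/2) (by norm_num : (0:ℝ) ≤ 1/2) (by norm_num)
  simp only [smul_eq_mul, hg] at key
  have hpt : (1:ℝ)/2 * p + 1/2 * q = (p+q)/2 := by ring
  rw [hpt] at key
  nlinarith [key]

lemma Jfun_pos {r : ℕ} {c : Fin r → ℝ} (hc : ∀ i, 0 < c i) {x : ℝ} (hx : 0 < x) :
    0 < Jfun r c x :=
  Finset.prod_pos fun i _ => Real.sinh_pos_iff.mpr (mul_pos (hc i) hx)

lemma Jfun_mid {r : ℕ} {c : Fin r → ℝ} (hc : ∀ i, 0 < c i) {a b : ℝ}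
    (ha : 0 < a) (hb : 0 < b) :
    Jfun r c a * Jfun r c b ≤ Jfun r c ((a+b)/2) ^ 2 := by
  unfold Jfun
  rw [← Finset.prod_mul_distrib, ← Finset.prod_pow]
  apply Finset.prod_le_prod
  · intro i _
    exact mul_nonneg (Real.sinh_nonneg_iff.mpr (mul_pos (hc i) ha).le) (Real.sinh_nonneg_iff.mpr (mul_pos (hc i) hb).le)
  · intro i _
    have := sinh_mul_sinh_le (c i * a) (c i * b)
    have he : (c i * a + c i * b)/2 = c i * ((a+b)/2) := by ring
    rwa [he] at this

lemma jfun_mid {r : ℕ} {c : Fin r → ℝ} (hc : ∀ i, 0 < c i) {a b : ℝ}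
    (ha : 0 < a) (hb : 0 < b) :
    jfun r c ((a+b)/2) ≤ (jfun r c a + jfun r c b)/2 := by
  have hJa := Jfun_pos hc ha
  have hJb := Jfun_pos hc hb
  have hJm := Jfun_pos hc (by linarith : (0:ℝ) < (a+b)/2)
  have h1 : Real.log (Jfun r c a * Jfun r c b) ≤ Real.log (Jfun r c ((a+b)/2) ^ 2) :=
    Real.log_le_log (mul_pos hJa hJb) (Jfun_mid hc ha hb)
  rw [Real.log_mul hJa.ne' hJb.ne', Real.log_pow] at h1
  unfold jfun
  push_cast at h1
  linarith

theorem delta_bound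
    (r : ℕ) (hr : 1 ≤ r) (c : Fin r → ℝ) (hc : ∀ i, 0 < c i)
    (lam : ℝ) (hlam : lam = 1 + (1/2) * ∑ i, c i)
    (v : ℝ → ℝ) (m : ℕ) (A : ℝ) (hA : 0 < A) (a bk : Fin m → ℝ)
    (hbk : ∀ k, bk k ≠ 0)
    (hv : ∀ p, v p = A * p ^ r * ∏ k, (bk k - a k * p))
    (hvpos : ∀ p ∈ Set.Ioo (0:ℝ) lam, 0 < v p)
    (b : ℝ) (hb : b ∈ Set.Ioc (0:ℝ) 1)
    (u : ℝ → ℝ → ℝ) (hu : ∀ s ∈ Set.Ico (0:ℝ) b, IsSolution r c v lam s (u s))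
    (xs ms ys ds : ℝ → ℝ)
    (hxs : ∀ s ∈ Set.Ico (0:ℝ) b, xs s ∈ Set.Ioi (0:ℝ) ∧
      ∀ x ∈ Set.Ioi (0:ℝ), ms s ≤ 2 * u s x + jfun r c x)
    (hms : ∀ s ∈ Set.Ico (0:ℝ) b, ms s = 2 * u s (xs s) + jfun r c (xs s))
    (hds : ∀ s ∈ Set.Ico (0:ℝ) b, 0 ≤ ds s ∧
      Set.Icc (ys s - ds s) (ys s + ds s) =
        {x : ℝ | 0 < x ∧ 2 * u s x + jfun r c x ≤ ms s + 1}) :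
    ∃ C > (0:ℝ), ∀ s ∈ Set.Ico (0:ℝ) b, ds s ≤ C * Real.exp (ms s / 2) := by
  have hlam0 : 0 < lam := by
    have : 0 ≤ ∑ i, c i := Finset.sum_nonneg fun i _ => (hc i).le
    rw [hlam]; linarith
  have hvc : Continuous v := by
    have hveq : v = fun p => A * p ^ r * ∏ k, (bk k - a k * p) := funext hv
    rw [hveq]
    exact (continuous_const.mul (continuous_pow r)).mul
      (continuous_finset_prod _ fun k _ => continuous_const.sub (continuous_const.mul continuous_id))
  obtain ⟨z, hz, hzmax⟩ := isCompact_Icc.exists_isMaxOn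
    (Set.nonempty_Icc.mpr hlam0.le) (hvc.continuousOn (s := Set.Icc 0 lam))
  set M : ℝ := max (v z) 1 with hM
  have hMpos : (0:ℝ) < M := lt_of_lt_of_le one_pos (le_max_right _ _)
  have hMv : ∀ p ∈ Set.Icc (0:ℝ) lam, v p ≤ M := fun p hp =>
    le_trans (hzmax hp) (le_max_left _ _)
  refine ⟨Real.sqrt (M * Real.exp 1), Real.sqrt_pos.mpr (by positivity), ?_⟩
  intro s hs
  obtain ⟨husm, -, hupp, huim, hode⟩ := hu s hs
  obtain ⟨-, hνlow⟩ := hxs s hs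
  obtain ⟨hd0, hset⟩ := hds s hs
  set p := ys s - ds s with hpdef
  set q := ys s + ds s with hqdef
  have hpq : p ≤ q := by rw [hpdef, hqdef]; linarith
  have hpmem : p ∈ {x : ℝ | 0 < x ∧ 2 * u s x + jfun r c x ≤ ms s + 1} := by
    rw [← hset]; exact Set.left_mem_Icc.mpr hpq
  have hqmem : q ∈ {x : ℝ | 0 < x ∧ 2 * u s x + jfun r c x ≤ ms s + 1} := by
    rw [← hset]; exact Set.right_mem_Icc.mpr hpq
  obtain ⟨hp0, hνp⟩ := hpmem
  obtain ⟨hq0, hνq⟩ := hqmem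
  set κ : ℝ := Real.exp (-(ms s + 1)) / M with hκdef
  have hκle : ∀ x ∈ Set.Icc p q, κ ≤ deriv (deriv (u s)) x := by
    intro x hx
    rw [hset] at hx
    obtain ⟨hx0, hνx⟩ := hx
    have hux : deriv (u s) x ∈ Set.Ico 0 (lam - s) := by
      rw [← huim]; exact ⟨x, hx0.le, rfl⟩
    have hvle : v (deriv (u s) x) ≤ M := by
      apply hMv
      exact ⟨hux.1, by have := hux.2; have := hs.1; linarith⟩
    have hJ : 0 < Jfun r c x := Jfun_pos hc hx0
    have hode' := hode x hx0
    have hEJ : Real.exp (-(2 * u s x)) * Jfun r c x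
        = Real.exp (-(2 * u s x + jfun r c x)) := by
      rw [show -(2 * u s x + jfun r c x) = -(2 * u s x) + Real.log (Jfun r c x) by
        unfold jfun; ring, Real.exp_add, Real.exp_log hJ]
    have hlow : Real.exp (-(ms s + 1)) ≤ Real.exp (-(2 * u s x + jfun r c x)) :=
      Real.exp_le_exp.mpr (by linarith)
    have h2 := hupp x
    have h3 : Real.exp (-(ms s + 1)) ≤ deriv (deriv (u s)) x * M := by
      calc Real.exp (-(ms s + 1)) ≤ Real.exp (-(2 * u s x + jfun r c x)) := hlow
        _ = deriv (deriv (u s)) x * v (deriv (u s) x) := by rw [hode', hEJ]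
        _ ≤ deriv (deriv (u s)) x * M := mul_le_mul_of_nonneg_left hvle h2.le
    rw [hκdef]
    exact (div_le_iff₀ hMpos).mpr h3
  have hmid0 : (0:ℝ) < (p+q)/2 := by linarith
  have hνmid := hνlow ((p+q)/2) hmid0
  have hjm := jfun_mid hc hp0 hq0
  have hum := uconv husm hpq hκle
  have hchain : κ * (q-p)^2 / 4 ≤ 1 := by linarith
  have hqp : q - p = 2 * ds s := by rw [hpdef, hqdef]; ring
  have hE1 : Real.exp (-(ms s + 1)) * (q-p)^2 / M ≤ 4 := by
    have : κ * (q-p)^2 = Real.exp (-(ms s + 1)) * (q-p)^2 / M := by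
      rw [hκdef]; ring
    linarith [hchain, this ▸ hchain]
  have hE2 : Real.exp (-(ms s + 1)) * (q-p)^2 ≤ 4 * M := by
    have := (div_le_iff₀ hMpos).mp hE1
    linarith
  have hEE : Real.exp (-(ms s + 1)) * Real.exp (ms s + 1) = 1 := by
    rw [← Real.exp_add, show -(ms s+1)+(ms s+1) = 0 by ring, Real.exp_zero]
  have h3 : (q-p)^2 ≤ 4 * M * Real.exp (ms s + 1) := by
    nlinarith [mul_le_mul_of_nonneg_right hE2 (Real.exp_pos (ms s + 1)).le, hEE,
      sq_nonneg (q-p), Real.exp_pos (ms s + 1)]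
  have hds2 : ds s ^ 2 ≤ M * Real.exp (ms s + 1) := by
    rw [hqp] at h3; nlinarith
  have hrhs : (Real.sqrt (M * Real.exp 1) * Real.exp (ms s / 2))^2
      = M * Real.exp (ms s + 1) := by
    rw [mul_pow, Real.sq_sqrt (by positivity : (0:ℝ) ≤ M * Real.exp 1)]
    rw [sq, ← Real.exp_add, mul_assoc, ← Real.exp_add]
    ring_nf
  calc ds s = Real.sqrt (ds s ^ 2) := (Real.sqrt_sq hd0).symm
    _ ≤ Real.sqrt ((Real.sqrt (M * Real.exp 1) * Real.exp (ms s / 2))^2) := by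
        apply Real.sqrt_le_sqrt; rw [hrhs]; exact hds2
    _ = Real.sqrt (M * Real.exp 1) * Real.exp (ms s / 2) :=
        Real.sqrt_sq (by positivity)
end
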